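/- Let (Θ_t) be the spectral tail process of a regularly varying stationary sequence with index α>0 such that ‖Θ‖_α^α=Σ_{t∈ℤ}|Θ_t|^α<∞ a.s., let Q=Θ/‖Θ‖_α, θ=E[max_{t∈ℤ}|Q_t|^α], and let Q̃ be the associated changed-measure cluster process. Then: (i) if 1<α<2 and the anti-clustering condition holds (so that E[(Σ_{t∈ℤ}|Q_t|)^α]<∞), then E[Σ_{t∈ℤ}|Q̃_t|] = θ^{−1}·E[(max_{t∈ℤ}|Q_t|)^{α−1}·Σ_{t∈ℤ}|Q_t|] ≤ θ^{−1}(E[(Σ_{t∈ℤ}|Q_t|)^α])^{1/α} < ∞; (ii) if 0<α<1, then E[Σ_{t∈ℤ}|Q̃_t|] ≤ θ^{−1} < ∞. -/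

import Mathlib

open MeasureTheory Filter Real Set
open scoped Topology ENNReal NNReal RealInnerProductSpace ProbabilityTheory

noncomputable section

/-- Euclidean space `ℝ^d`. -/
abbrev Euc (d : ℕ) : Type := EuclideanSpace ℝ (Fin d)

variable {Ω : Type*} [MeasurableSpace Ω]

/-- Partial sums `S_n = X_1 + ⋯ + X_n`. -/
def pSum {d : ℕ} (X : ℤ → Ω → Euc d) (n : ℕ) (ω : Ω) : Euc d :=
  ∑ t ∈ Finset.Icc (1 : ℤ) (n : ℤ), X t ω

/-- Partial maxima `M_n = max_{1 ≤ i ≤ n} |X_i|`. -/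
def pMax {d : ℕ} (X : ℤ → Ω → Euc d) (n : ℕ) (ω : Ω) : ℝ :=
  (((Finset.Icc (1 : ℤ) (n : ℤ)).sup fun t => ‖X t ω‖₊ : ℝ≥0) : ℝ)

/-- `γ_{n,p}^p = Σ_{t=1}^n |X_t|^p`. -/
def pModP {d : ℕ} (X : ℤ → Ω → Euc d) (p : ℝ) (n : ℕ) (ω : Ω) : ℝ :=
  ∑ t ∈ Finset.Icc (1 : ℤ) (n : ℤ), ‖X t ω‖ ^ p

/-- Strict stationarity of an `ℝ^d`-valued sequence indexed by `ℤ`. -/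
def Stationary {d : ℕ} (P : Measure Ω) (X : ℤ → Ω → Euc d) : Prop :=
  ∀ k : ℤ, Measure.map (fun ω => (fun t : ℤ => X (t + k) ω)) P
    = Measure.map (fun ω => (fun t : ℤ => X t ω)) P

/-- `Y` is Pareto(α): `P(Y > y) = y^{-α}` for `y ≥ 1`. -/
def Pareto (P : Measure Ω) (α : ℝ) (Y : Ω → ℝ) : Prop :=
  ∀ y : ℝ, 1 ≤ y → (P {ω | y < Y ω}).toReal = y ^ (-α)

/-- Regular variation of the stationary sequence `X` with index `α`, tail process `Y • Θ`:
for every `h ≥ 0`, the conditional law of `x⁻¹(X_{-h},…,X_h)` given `|X_0| > x` converges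
weakly, as `x → ∞`, to the law of `Y • (Θ_{-h},…,Θ_h)`, with `Y` Pareto(α) independent of `Θ`. -/
def RegVary {d : ℕ} (P : Measure Ω) (X : ℤ → Ω → Euc d) (α : ℝ)
    (Y : Ω → ℝ) (Θ : ℤ → Ω → Euc d) : Prop :=
  Pareto P α Y ∧
  ProbabilityTheory.IndepFun Y (fun ω => (fun t : ℤ => Θ t ω)) P ∧
  ∀ h : ℕ, ∀ f : BoundedContinuousFunction (Fin (2 * h + 1) → Euc d) ℝ,
    Tendsto (fun x : ℝ =>
        (∫ ω, Set.indicator {ω' | x < ‖X 0 ω'‖}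
            (fun ω' => f (fun i => x⁻¹ • X ((i : ℤ) - (h : ℤ)) ω')) ω ∂P)
          / (P {ω | x < ‖X 0 ω‖}).toReal)
      atTop
      (𝓝 (∫ ω, f (fun i => Y ω • Θ ((i : ℤ) - (h : ℤ)) ω) ∂P))

/-- Normalizing sequence: `a_n > 0` and `n P(|X_0| > a_n) → 1`. -/
def NormSeq {d : ℕ} (P : Measure Ω) (X : ℤ → Ω → Euc d) (a : ℕ → ℝ) : Prop :=
  (∀ n, 0 < a n) ∧
  Tendsto (fun n : ℕ => (n : ℝ) * (P {ω | a n < ‖X 0 ω‖}).toReal) atTop (𝓝 1)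

/-- Hybrid characteristic function `E[exp(i c⁻¹ uᵀ S_m) 1(c⁻¹ M_m ≤ x)]`. -/
def hybCF {d : ℕ} (P : Measure Ω) (X : ℤ → Ω → Euc d) (c : ℝ) (m : ℕ)
    (u : Euc d) (x : ℝ) : ℂ :=
  ∫ ω, Set.indicator {ω' | pMax X m ω' ≤ c * x}
    (fun ω' => Complex.exp (Complex.I * ((⟪u, pSum X m ω'⟫ / c : ℝ) : ℂ))) ω ∂P

/-- The mixing condition (M). -/
def MixM {d : ℕ} (P : Measure Ω) (X : ℤ → Ω → Euc d) (a : ℕ → ℝ) (r : ℕ → ℕ) : Prop :=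
  ∀ (u : Euc d) (x : ℝ), 0 < x →
    Tendsto (fun n : ℕ =>
        hybCF P X (a n) n u x - hybCF P X (a n) (r n) u x ^ (n / r n))
      atTop (𝓝 0)

/-- Hybrid characteristic function–Laplace transform
`E[exp(i c⁻¹ uᵀ S_m − c^{-p} λ γ_{m,p}^p) 1(c⁻¹ M_m ≤ x)]`. -/
def hybCFL {d : ℕ} (P : Measure Ω) (X : ℤ → Ω → Euc d) (c p : ℝ) (m : ℕ)
    (u : Euc d) (x lam : ℝ) : ℂ :=
  ∫ ω, Set.indicator {ω' | pMax X m ω' ≤ c * x}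
    (fun ω' => Complex.exp (Complex.I * ((⟪u, pSum X m ω'⟫ / c : ℝ) : ℂ)
      - ((lam * pModP X p m ω' / c ^ p : ℝ) : ℂ))) ω ∂P

/-- The strengthened mixing condition (M_p). -/
def MixMp {d : ℕ} (P : Measure Ω) (X : ℤ → Ω → Euc d) (a : ℕ → ℝ) (r : ℕ → ℕ)
    (p : ℝ) : Prop :=
  ∀ (u : Euc d) (x lam : ℝ), 0 < x → 0 < lam →
    Tendsto (fun n : ℕ =>
        hybCFL P X (a n) p n u x lam - hybCFL P X (a n) p (r n) u x lam ^ (n / r n))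
      atTop (𝓝 0)

/-- The anti-clustering condition (AC). -/
def AntiCl {d : ℕ} (P : Measure Ω) (X : ℤ → Ω → Euc d) (a : ℕ → ℝ) (r : ℕ → ℕ) : Prop :=
  Tendsto (fun k : ℕ =>
      Filter.limsup (fun n : ℕ =>
        (n : ℝ) * ∑ j ∈ Finset.Icc (k : ℤ) (r n : ℤ),
          ∫ ω, min (‖X j ω‖ / a n) 1 * min (‖X 0 ω‖ / a n) 1 ∂P) atTop)
    atTop (𝓝 0)

/-- `‖Θ‖_α = (Σ_{t∈ℤ} |Θ_t|^α)^{1/α}`. -/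
def thNorm {d : ℕ} (α : ℝ) (Θ : ℤ → Ω → Euc d) (ω : Ω) : ℝ :=
  (∑' t : ℤ, ‖Θ t ω‖ ^ α) ^ (1 / α)

/-- Spectral cluster process `Q = Θ / ‖Θ‖_α`. -/
def cQ {d : ℕ} (α : ℝ) (Θ : ℤ → Ω → Euc d) (t : ℤ) (ω : Ω) : Euc d :=
  (thNorm α Θ ω)⁻¹ • Θ t ω

/-- `max_{t∈ℤ} |Q_t|`. -/
def cQmax {d : ℕ} (α : ℝ) (Θ : ℤ → Ω → Euc d) (ω : Ω) : ℝ :=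
  ⨆ t : ℤ, ‖cQ α Θ t ω‖

/-- `Σ_{t∈ℤ} Q_t`. -/
def cQsum {d : ℕ} (α : ℝ) (Θ : ℤ → Ω → Euc d) (ω : Ω) : Euc d :=
  ∑' t : ℤ, cQ α Θ t ω

/-- `Σ_{t∈ℤ} |Q_t|^p`. -/
def cQpsum {d : ℕ} (α p : ℝ) (Θ : ℤ → Ω → Euc d) (ω : Ω) : ℝ :=
  ∑' t : ℤ, ‖cQ α Θ t ω‖ ^ p

/-- `‖Q‖_p = (Σ_{t∈ℤ} |Q_t|^p)^{1/p}`. -/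
def cQpnorm {d : ℕ} (α p : ℝ) (Θ : ℤ → Ω → Euc d) (ω : Ω) : ℝ :=
  cQpsum α p Θ ω ^ (1 / p)

/-- Extremal index `θ = E[max_{t∈ℤ}|Q_t|^α]`. -/
def extIdx {d : ℕ} (P : Measure Ω) (α : ℝ) (Θ : ℤ → Ω → Euc d) : ℝ :=
  ∫ ω, cQmax α Θ ω ^ α ∂P

/-- The law of `Q̃`: the conditional law of `Q / max_t |Q_t|` given `Y·max_t|Q_t| > 1`. -/
def lawQtilde {d : ℕ} (P : Measure Ω) (α : ℝ) (Y : Ω → ℝ) (Θ : ℤ → Ω → Euc d) :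
    Measure (ℤ → Euc d) :=
  (P {ω | 1 < Y ω * cQmax α Θ ω})⁻¹ •
    Measure.map (fun ω => (fun t : ℤ => (cQmax α Θ ω)⁻¹ • cQ α Θ t ω))
      (P.restrict {ω | 1 < Y ω * cQmax α Θ ω})

/-- `σ^α(u) = E[|uᵀ Σ_t Q_t|^α]`. -/
def sigmaAl {d : ℕ} (P : Measure Ω) (α : ℝ) (Θ : ℤ → Ω → Euc d) (u : Euc d) : ℝ :=
  ∫ ω, |⟪u, cQsum α Θ ω⟫| ^ α ∂P

/-- `β(u)`. -/
def betaAl {d : ℕ} (P : Measure Ω) (α : ℝ) (Θ : ℤ → Ω → Euc d) (u : Euc d) : ℝ :=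
  (∫ ω, (max ⟪u, cQsum α Θ ω⟫ 0 ^ α - max (-⟪u, cQsum α Θ ω⟫) 0 ^ α) ∂P)
    / sigmaAl P α Θ u

/-- `c_α = Γ(2−α) cos(απ/2)/(1−α)`. -/
def cAl (α : ℝ) : ℝ := Real.Gamma (2 - α) * Real.cos (α * π / 2) / (1 - α)

/-- The α-stable characteristic function `φ_{ξ_α}`. -/
def stableCF {d : ℕ} (P : Measure Ω) (α : ℝ) (Θ : ℤ → Ω → Euc d) (u : Euc d) : ℂ :=
  Complex.exp (-(((cAl α * sigmaAl P α Θ u : ℝ)) : ℂ) *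
    (1 - Complex.I * ((betaAl P α Θ u : ℝ) : ℂ) * ((Real.tan (α * π / 2) : ℝ) : ℂ)))

/-- Convergence in distribution (weak convergence of the laws of `Z_n` under `P` to `ν`). -/
def WeakLim {γ : Type*} [TopologicalSpace γ] [MeasurableSpace γ] (P : Measure Ω)
    (Z : ℕ → Ω → γ) (ν : Measure γ) : Prop :=
  ∀ f : BoundedContinuousFunction γ ℝ,
    Tendsto (fun n : ℕ => ∫ ω, f (Z n ω) ∂P) atTop (𝓝 (∫ z, f z ∂ν))

/-!
Integrating out the Pareto variable `Y`, which is independent of `Θ`, turns the conditioning on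
`{Y · max_t |Q_t| > 1}` into the weight `(max_t |Q_t|)^α`: the event itself has probability `θ`,
and `E[G(Q̃)] = θ⁻¹ E[(max_t |Q_t|)^α G(Q / max_t |Q_t|)]`. With `G = Σ_t |·|` this is
`θ⁻¹ E[(max_t |Q_t|)^(α-1) Σ_t |Q_t|]`. Regular variation forces `|Y Θ_0| ≥ 1`, so `Θ_0 ≠ 0` and
`θ > 0`. For `α < 1`, `Σ_t |Q_t| ≤ (max_t |Q_t|)^(1-α) Σ_t |Q_t|^α ≤ (max_t |Q_t|)^(1-α)`; for
`α > 1`, `(max_t |Q_t|)^(α-1) ≤ 1` and Jensen's inequality bounds `E[Σ_t |Q_t|]` by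
`E[(Σ_t |Q_t|)^α]^(1/α)`.
-/

open ProbabilityTheory

theorem tsum_le_rpow_mul_tsum_rpow {ι : Type*} {f : ι → ℝ} {M p : ℝ} (hf0 : ∀ i, 0 ≤ f i)
    (hfM : ∀ i, f i ≤ M) (hp : p ≤ 1) (hs : Summable fun i => f i ^ p) :
    ∑' i, f i ≤ M ^ (1 - p) * ∑' i, f i ^ p := by
  have hle : ∀ i, f i ≤ M ^ (1 - p) * f i ^ p := by
    intro i
    rcases (hf0 i).eq_or_lt with h | h
    · rw [← h]
      exact mul_nonneg (Real.rpow_nonneg (h.le.trans (hfM i)) _) (Real.rpow_nonneg le_rfl _)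
    · calc f i = f i ^ (1 - p) * f i ^ p := by rw [← Real.rpow_add h, sub_add_cancel, Real.rpow_one]
        _ ≤ M ^ (1 - p) * f i ^ p := by gcongr; exact hfM i
  rw [← tsum_mul_left]
  exact (hs.mul_left _).of_nonneg_of_le hf0 hle |>.tsum_le_tsum hle (hs.mul_left _)

section ClusterProcess

variable {T : Type*} {d : ℕ} {α : ℝ} {Θ : ℤ → T → Euc d} {ω : T}

theorem thNorm_nonneg : 0 ≤ thNorm α Θ ω :=
  Real.rpow_nonneg (tsum_nonneg fun _ => Real.rpow_nonneg (norm_nonneg _) _) _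

theorem norm_cQ (t : ℤ) : ‖cQ α Θ t ω‖ = ‖Θ t ω‖ / thNorm α Θ ω := by
  rw [cQ, norm_smul, norm_inv, Real.norm_of_nonneg thNorm_nonneg, inv_mul_eq_div]

theorem norm_le_thNorm (hα : 0 < α) (hs : Summable fun t => ‖Θ t ω‖ ^ α) (t : ℤ) :
    ‖Θ t ω‖ ≤ thNorm α Θ ω := by
  calc ‖Θ t ω‖ = (‖Θ t ω‖ ^ α) ^ (1 / α) := by
        rw [one_div, Real.rpow_rpow_inv (norm_nonneg _) hα.ne']
    _ ≤ thNorm α Θ ω := by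
        rw [thNorm]
        gcongr
        exact hs.le_tsum t fun _ _ => Real.rpow_nonneg (norm_nonneg _) _

theorem norm_cQ_le_one (hα : 0 < α) (t : ℤ) : ‖cQ α Θ t ω‖ ≤ 1 := by
  rw [norm_cQ]
  by_cases hs : Summable fun t => ‖Θ t ω‖ ^ α
  · exact div_le_one_of_le₀ (norm_le_thNorm hα hs t) thNorm_nonneg
  · rw [thNorm, tsum_eq_zero_of_not_summable hs, Real.zero_rpow (by positivity), div_zero]
    exact zero_le_one

theorem norm_cQ_le_cQmax (hα : 0 < α) (t : ℤ) : ‖cQ α Θ t ω‖ ≤ cQmax α Θ ω :=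
  le_ciSup (f := fun t => ‖cQ α Θ t ω‖) ⟨1, by rintro _ ⟨s, rfl⟩; exact norm_cQ_le_one hα s⟩ t

theorem cQmax_nonneg (hα : 0 < α) : 0 ≤ cQmax α Θ ω :=
  (norm_nonneg _).trans (norm_cQ_le_cQmax hα 0)

theorem cQmax_le_one (hα : 0 < α) : cQmax α Θ ω ≤ 1 :=
  ciSup_le fun t => norm_cQ_le_one hα t

theorem cQmax_pos (hα : 0 < α) (hs : Summable fun t => ‖Θ t ω‖ ^ α) (h0 : Θ 0 ω ≠ 0) :
    0 < cQmax α Θ ω := by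
  have hnorm : 0 < thNorm α Θ ω := (norm_pos_iff.2 h0).trans_le (norm_le_thNorm hα hs 0)
  refine lt_of_lt_of_le ?_ (norm_cQ_le_cQmax hα 0)
  rw [norm_cQ]
  exact div_pos (norm_pos_iff.2 h0) hnorm

theorem tsum_norm_cQ_rpow_le_one (hα : 0 < α) :
    ∑' t, ‖cQ α Θ t ω‖ ^ α ≤ 1 := by
  have hpow : thNorm α Θ ω ^ α = ∑' t, ‖Θ t ω‖ ^ α := by
    rw [thNorm, one_div, Real.rpow_inv_rpow (tsum_nonneg fun _ => by positivity) hα.ne']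
  simp_rw [norm_cQ, Real.div_rpow (norm_nonneg _) thNorm_nonneg, hpow, tsum_div_const]
  exact div_le_one_of_le₀ le_rfl (tsum_nonneg fun _ => by positivity)

theorem cQmax_rpow_mul_tsum_norm_cQ_le_one (hα : 0 < α) (hα1 : α < 1)
    (hs : Summable fun t => ‖Θ t ω‖ ^ α) :
    cQmax α Θ ω ^ (α - 1) * ∑' t, ‖cQ α Θ t ω‖ ≤ 1 := by
  rcases (cQmax_nonneg hα (Θ := Θ) (ω := ω)).eq_or_lt with hM | hM
  · rw [← hM, Real.zero_rpow (by linarith), zero_mul]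
    exact zero_le_one
  have hsQ : Summable fun t => ‖cQ α Θ t ω‖ ^ α := by
    simpa only [norm_cQ, Real.div_rpow (norm_nonneg _) thNorm_nonneg] using hs.div_const _
  calc cQmax α Θ ω ^ (α - 1) * ∑' t, ‖cQ α Θ t ω‖
      ≤ cQmax α Θ ω ^ (α - 1) * (cQmax α Θ ω ^ (1 - α) * ∑' t, ‖cQ α Θ t ω‖ ^ α) := by
        gcongr
        exact tsum_le_rpow_mul_tsum_rpow (fun _ => norm_nonneg _) (norm_cQ_le_cQmax hα)
          hα1.le hsQ
    _ = ∑' t, ‖cQ α Θ t ω‖ ^ α := by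
        rw [← mul_assoc, ← Real.rpow_add hM, sub_add_sub_cancel', sub_self, Real.rpow_zero,
          one_mul]
    _ ≤ 1 := tsum_norm_cQ_rpow_le_one hα

theorem cQ_coord (t : ℤ) (ω : T) :
    cQ α (fun s (w : ℤ → Euc d) => w s) t (fun s => Θ s ω) = cQ α Θ t ω :=
  rfl

theorem cQmax_coord (ω : T) :
    cQmax α (fun s (w : ℤ → Euc d) => w s) (fun s => Θ s ω) = cQmax α Θ ω :=
  rfl

theorem measurable_thNorm [MeasurableSpace T] (hΘ : ∀ t, Measurable (Θ t)) :
    Measurable (thNorm α Θ) :=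
  Measurable.pow_const (Measurable.tsum fun t => (hΘ t).norm.pow_const α) _

theorem measurable_cQ [MeasurableSpace T] (hΘ : ∀ t, Measurable (Θ t)) (t : ℤ) :
    Measurable (cQ α Θ t) :=
  (measurable_thNorm hΘ).inv.smul (hΘ t)

theorem measurable_cQmax [MeasurableSpace T] (hΘ : ∀ t, Measurable (Θ t)) :
    Measurable (cQmax α Θ) :=
  Measurable.iSup fun t => (measurable_cQ hΘ t).norm

theorem measurable_tsum_norm_cQ [MeasurableSpace T] (hΘ : ∀ t, Measurable (Θ t)) :
    Measurable fun ω => ∑' t, ‖cQ α Θ t ω‖ :=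
  Measurable.tsum fun t => (measurable_cQ hΘ t).norm

end ClusterProcess

theorem integral_le_integral_rpow_rpow {μ : Measure Ω} [IsProbabilityMeasure μ] {f : Ω → ℝ}
    {p : ℝ} (hp : 1 ≤ p) (hf0 : 0 ≤ᵐ[μ] f) (hf : Integrable f μ)
    (hfp : Integrable (fun x => f x ^ p) μ) :
    ∫ x, f x ∂μ ≤ (∫ x, f x ^ p ∂μ) ^ (1 / p) := by
  rw [one_div, Real.le_rpow_inv_iff_of_pos (integral_nonneg_of_ae hf0)
    (integral_nonneg_of_ae (hf0.mono fun x hx => Real.rpow_nonneg hx p)) (by linarith)]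
  exact (convexOn_rpow hp).map_integral_le (Real.continuous_rpow_const (by linarith)).continuousOn
    isClosed_Ici hf0 hf hfp

theorem integrable_and_integral_eq_of_lintegral_eq {μ : Measure Ω} {f g : Ω → ℝ} {c : ℝ}
    (hc : 0 ≤ c) (hf : AEStronglyMeasurable f μ) (hf0 : 0 ≤ᵐ[μ] f) (hg0 : 0 ≤ᵐ[μ] g)
    (hg : Integrable g μ)
    (h : ∫⁻ x, ENNReal.ofReal (f x) ∂μ = ENNReal.ofReal c * ∫⁻ x, ENNReal.ofReal (g x) ∂μ) :
    Integrable f μ ∧ ∫ x, f x ∂μ = c * ∫ x, g x ∂μ := by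
  have hfin : ∫⁻ x, ENNReal.ofReal (f x) ∂μ < ⊤ := by
    rw [h]
    exact ENNReal.mul_lt_top ENNReal.ofReal_lt_top hg.lintegral_lt_top
  refine ⟨⟨hf, (hasFiniteIntegral_iff_ofReal hf0).2 hfin⟩, ?_⟩
  rw [integral_eq_lintegral_of_nonneg_ae hf0 hf, integral_eq_lintegral_of_nonneg_ae hg0 hg.1, h,
    ENNReal.toReal_mul, ENNReal.toReal_ofReal hc]

section Pareto

variable {P : Measure Ω} [IsFiniteMeasure P] {α : ℝ} {Y : Ω → ℝ}

theorem Pareto.measure_one_lt_mul (hY : Pareto P α Y) (hα : α ≠ 0) {m : ℝ} (hm0 : 0 ≤ m)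
    (hm1 : m ≤ 1) : P {ω | 1 < Y ω * m} = ENNReal.ofReal (m ^ α) := by
  rcases hm0.eq_or_lt with rfl | hm
  · simp [Real.zero_rpow hα, not_lt.2 zero_le_one]
  have hset : {ω | 1 < Y ω * m} = {ω | m⁻¹ < Y ω} := by
    ext ω
    exact (inv_lt_iff_one_lt_mul₀ hm).symm
  rw [hset, ← ENNReal.ofReal_toReal (measure_ne_top P _), hY _ ((one_le_inv₀ hm).2 hm1),
    Real.inv_rpow hm0, Real.rpow_neg hm0, inv_inv]

theorem Pareto.setLIntegral_one_lt_mul (hY : Pareto P α Y) (hα : α ≠ 0) {β : Type*}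
    [MeasurableSpace β] {W : Ω → β} (hYm : Measurable Y) (hWm : Measurable W)
    (hInd : IndepFun Y W P) {M : β → ℝ} (hM : Measurable M) (hM0 : ∀ w, 0 ≤ M w)
    (hM1 : ∀ w, M w ≤ 1) {G : β → ℝ≥0∞} (hG : Measurable G) :
    ∫⁻ ω in {ω | 1 < Y ω * M (W ω)}, G (W ω) ∂P
      = ∫⁻ ω, ENNReal.ofReal (M (W ω) ^ α) * G (W ω) ∂P := by
  set F : ℝ × β → ℝ≥0∞ := {q | 1 < q.1 * M q.2}.indicator (G ∘ Prod.snd)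
  have hs : MeasurableSet {q : ℝ × β | 1 < q.1 * M q.2} :=
    measurableSet_lt measurable_const (measurable_fst.mul (hM.comp measurable_snd))
  have hF : Measurable F := (hG.comp measurable_snd).indicator hs
  have hinner : ∀ w, ∫⁻ y, F (y, w) ∂P.map Y = ENNReal.ofReal (M w ^ α) * G w := by
    intro w
    have hsw : MeasurableSet {y : ℝ | 1 < y * M w} :=
      measurableSet_lt measurable_const (measurable_id.mul_const _)
    have hFw : (fun y => F (y, w)) = {y | 1 < y * M w}.indicator fun _ => G w := by
      ext y
      simp [F, Set.indicator]
    rw [hFw, lintegral_indicator_const hsw, Measure.map_apply hYm hsw, mul_comm]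
    exact congrArg (· * G w) (hY.measure_one_lt_mul hα (hM0 w) (hM1 w))
  calc ∫⁻ ω in {ω | 1 < Y ω * M (W ω)}, G (W ω) ∂P = ∫⁻ ω, F (Y ω, W ω) ∂P :=
        (lintegral_indicator (hs.preimage (hYm.prodMk hWm)) (G ∘ W)).symm
    _ = ∫⁻ q, F q ∂(P.map Y).prod (P.map W) := by
        rw [← (indepFun_iff_map_prod_eq_prod_map_map hYm.aemeasurable hWm.aemeasurable).1
          hInd, lintegral_map hF (hYm.prodMk hWm)]
    _ = ∫⁻ w, ENNReal.ofReal (M w ^ α) * G w ∂P.map W := by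
        rw [lintegral_prod_symm _ hF.aemeasurable]
        simp_rw [hinner]
    _ = ∫⁻ ω, ENNReal.ofReal (M (W ω) ^ α) * G (W ω) ∂P :=
        lintegral_map ((hM.pow_const α).ennreal_ofReal.mul hG) hWm

end Pareto

def oneSubNormPosPart (E : Type*) [SeminormedAddCommGroup E] :
    BoundedContinuousFunction (Fin 1 → E) ℝ :=
  BoundedContinuousFunction.mkOfBound ⟨fun v => max 0 (1 - ‖v 0‖), by fun_prop⟩ 1 fun v w =>
    Real.dist_le_of_mem_Icc_01
      ⟨le_max_left _ _, max_le zero_le_one (by linarith [norm_nonneg (v 0)])⟩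
      ⟨le_max_left _ _, max_le zero_le_one (by linarith [norm_nonneg (w 0)])⟩

@[simp]
theorem oneSubNormPosPart_apply {E : Type*} [SeminormedAddCommGroup E] (v : Fin 1 → E) :
    oneSubNormPosPart E v = max 0 (1 - ‖v 0‖) :=
  rfl

theorem RegVary.one_le_norm_smul {d : ℕ} {P : Measure Ω} [IsFiniteMeasure P] {α : ℝ}
    {X Θ : ℤ → Ω → Euc d} {Y : Ω → ℝ} (hrv : RegVary P X α Y Θ) (hYm : Measurable Y)
    (hΘm : Measurable (Θ 0)) :
    ∀ᵐ ω ∂P, 1 ≤ ‖Y ω • Θ 0 ω‖ := by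
  -- `(1 - ‖x⁻¹ • X 0‖)⁺` vanishes on `{x < ‖X 0‖}`, so every conditional expectation is `0`
  have hlim : ∫ ω, max 0 (1 - ‖Y ω • Θ 0 ω‖) ∂P = 0 := by
    refine tendsto_nhds_unique (by simpa using hrv.2.2 0 (oneSubNormPosPart (Euc d)))
      (tendsto_const_nhds.congr' ?_)
    filter_upwards [eventually_gt_atTop 0] with x hx
    refine (zero_div _).symm.trans (congrArg (· / _) (integral_eq_zero_of_ae ?_).symm)
    refine Eventually.of_forall fun ω => Set.indicator_apply_eq_zero.2 fun hω => ?_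
    refine max_eq_left ?_
    rw [sub_nonpos, norm_smul, norm_inv, Real.norm_of_nonneg hx.le, inv_mul_eq_div,
      one_le_div hx]
    exact le_of_lt hω
  have hg : Integrable (fun ω => max 0 (1 - ‖Y ω • Θ 0 ω‖)) P := by
    refine Integrable.of_bound (by fun_prop) 1 (Eventually.of_forall fun ω => ?_)
    rw [Real.norm_of_nonneg (le_max_left _ _)]
    exact max_le zero_le_one (sub_le_self _ (norm_nonneg _))
  filter_upwards [(integral_eq_zero_iff_of_nonneg (fun ω => le_max_left _ _) hg).1 hlim]
    with ω hω
  simpa using hω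

section SpectralCluster

variable {d : ℕ} {P : Measure Ω} {α : ℝ} {Y : Ω → ℝ} {Θ : ℤ → Ω → Euc d}

theorem integrable_cQmax_rpow [IsFiniteMeasure P] (hα : 0 < α) (hΘm : ∀ t, Measurable (Θ t)) :
    Integrable (fun ω => cQmax α Θ ω ^ α) P :=
  Integrable.of_bound ((measurable_cQmax hΘm).pow_const α).aestronglyMeasurable 1
    (Eventually.of_forall fun ω => by
      rw [Real.norm_of_nonneg (Real.rpow_nonneg (cQmax_nonneg hα) α)]
      exact Real.rpow_le_one (cQmax_nonneg hα) (cQmax_le_one hα) hα.le)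

theorem measure_one_lt_mul_cQmax [IsProbabilityMeasure P] (hα : 0 < α) (hYm : Measurable Y)
    (hΘm : ∀ t, Measurable (Θ t)) (hY : Pareto P α Y) (hInd : IndepFun Y (fun ω t => Θ t ω) P) :
    P {ω | 1 < Y ω * cQmax α Θ ω} = ENNReal.ofReal (extIdx P α Θ) := by
  have h : P {ω | 1 < Y ω * cQmax α Θ ω} = ∫⁻ ω, ENNReal.ofReal (cQmax α Θ ω ^ α) ∂P := by
    simpa only [mul_one, setLIntegral_one, cQmax_coord] using
      hY.setLIntegral_one_lt_mul hα.ne' hYm (measurable_pi_lambda _ hΘm) hInd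
      (measurable_cQmax (Θ := fun t (w : ℤ → Euc d) => w t) measurable_pi_apply)
      (fun _ => cQmax_nonneg hα) (fun _ => cQmax_le_one hα) (G := fun _ => 1) measurable_const
  rw [h, extIdx, ofReal_integral_eq_lintegral_ofReal (integrable_cQmax_rpow hα hΘm)
    (Eventually.of_forall fun ω => Real.rpow_nonneg (cQmax_nonneg hα) α)]

theorem extIdx_pos [IsProbabilityMeasure P] (hα : 0 < α) (hΘm : ∀ t, Measurable (Θ t))
    (hΘ0 : ∀ᵐ ω ∂P, Θ 0 ω ≠ 0) (hs : ∀ᵐ ω ∂P, Summable fun t => ‖Θ t ω‖ ^ α) :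
    0 < extIdx P α Θ := by
  have h0 : 0 ≤ fun ω => cQmax α Θ ω ^ α := fun ω => Real.rpow_nonneg (cQmax_nonneg hα) α
  refine (integral_nonneg h0).lt_of_ne fun h => ?_
  have hzero := (integral_eq_zero_iff_of_nonneg h0 (integrable_cQmax_rpow hα hΘm)).1 h.symm
  obtain ⟨ω, hω0, hωs, hω⟩ := (hΘ0.and (hs.and hzero)).exists
  exact (Real.rpow_pos_of_pos (cQmax_pos hα hωs hω0) α).ne' hω

theorem lintegral_lawQtilde (hΘm : ∀ t, Measurable (Θ t)) {G : (ℤ → Euc d) → ℝ≥0∞}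
    (hG : Measurable G) :
    ∫⁻ q, G q ∂lawQtilde P α Y Θ = (P {ω | 1 < Y ω * cQmax α Θ ω})⁻¹ *
      ∫⁻ ω in {ω | 1 < Y ω * cQmax α Θ ω}, G fun t => (cQmax α Θ ω)⁻¹ • cQ α Θ t ω ∂P := by
  rw [lawQtilde, lintegral_smul_measure, smul_eq_mul, lintegral_map hG
    (measurable_pi_lambda (fun ω t => (cQmax α Θ ω)⁻¹ • cQ α Θ t ω)
      fun t => (measurable_cQmax hΘm).inv.smul (measurable_cQ hΘm t))]

theorem aemeasurable_of_map_eq_lawQtilde [IsFiniteMeasure P] {Qt : ℤ → Ω → Euc d}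
    (hΘm : ∀ t, Measurable (Θ t)) (hA : P {ω | 1 < Y ω * cQmax α Θ ω} ≠ 0)
    (hQt : P.map (fun ω t => Qt t ω) = lawQtilde P α Y Θ) :
    AEMeasurable (fun ω t => Qt t ω) P := by
  by_contra h
  have hlaw := lintegral_lawQtilde (P := P) (α := α) (Y := Y) hΘm (G := fun _ => 1)
    measurable_const
  rw [← hQt, Measure.map_of_not_aemeasurable h, lintegral_zero_measure, setLIntegral_one,
    ENNReal.inv_mul_cancel hA (measure_ne_top P _)] at hlaw
  exact zero_ne_one hlaw

theorem lintegral_tsum_norm_eq_of_map_eq_lawQtilde [IsProbabilityMeasure P]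
    {Qt : ℤ → Ω → Euc d} (hα : 0 < α) (hα1 : α ≠ 1) (hYm : Measurable Y)
    (hΘm : ∀ t, Measurable (Θ t)) (hY : Pareto P α Y) (hInd : IndepFun Y (fun ω t => Θ t ω) P)
    (hθ : 0 < extIdx P α Θ)
    (hQt : P.map (fun ω t => Qt t ω) = lawQtilde P α Y Θ) :
    ∫⁻ ω, ENNReal.ofReal (∑' t, ‖Qt t ω‖) ∂P = ENNReal.ofReal (extIdx P α Θ)⁻¹ *
      ∫⁻ ω, ENNReal.ofReal (cQmax α Θ ω ^ (α - 1) * ∑' t, ‖cQ α Θ t ω‖) ∂P := by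
  have hA := measure_one_lt_mul_cQmax hα hYm hΘm hY hInd
  have hAne := hA.trans_ne (ENNReal.ofReal_pos.2 hθ).ne'
  have hΦ : Measurable fun q : ℤ → Euc d => ENNReal.ofReal (∑' t, ‖q t‖) :=
    (Measurable.tsum fun t => (measurable_pi_apply t).norm).ennreal_ofReal
  rw [← lintegral_map' hΦ.aemeasurable (aemeasurable_of_map_eq_lawQtilde hΘm hAne hQt), hQt,
    lintegral_lawQtilde hΘm hΦ, hA, ENNReal.ofReal_inv_of_pos hθ]
  congr 1
  have hnorm : ∀ ω, ∑' t, ‖(cQmax α Θ ω)⁻¹ • cQ α Θ t ω‖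
      = (cQmax α Θ ω)⁻¹ * ∑' t, ‖cQ α Θ t ω‖ := fun ω => by
    simp_rw [norm_smul, norm_inv, Real.norm_of_nonneg (cQmax_nonneg hα)]
    exact tsum_mul_left
  simp_rw [hnorm]
  refine (hY.setLIntegral_one_lt_mul hα.ne' hYm (measurable_pi_lambda _ hΘm) hInd
    (measurable_cQmax (Θ := fun t (w : ℤ → Euc d) => w t) measurable_pi_apply)
    (fun _ => cQmax_nonneg hα) (fun _ => cQmax_le_one hα)
    (G := fun w => ENNReal.ofReal ((cQmax α (fun t w => w t) w)⁻¹ *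
      ∑' t, ‖cQ α (fun t (w : ℤ → Euc d) => w t) t w‖))
    ((measurable_cQmax measurable_pi_apply).inv.mul
      (Measurable.tsum fun t => (measurable_cQ measurable_pi_apply t).norm)).ennreal_ofReal).trans
    (lintegral_congr fun ω => ?_)
  simp only [cQmax_coord, cQ_coord]
  -- `x ^ α * x⁻¹ = x ^ (α - 1)` fails only at `x = 0`, `α = 1`, since `0 ^ 0 = 1`
  rw [← ENNReal.ofReal_mul (Real.rpow_nonneg (cQmax_nonneg hα) α), ← mul_assoc, ← div_eq_mul_inv,
    ← Real.rpow_sub_one' (cQmax_nonneg hα) (sub_ne_zero.2 hα1)]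

theorem integrable_and_integral_tsum_norm_eq_of_map_eq_lawQtilde [IsProbabilityMeasure P]
    {Qt : ℤ → Ω → Euc d} (hα : 0 < α) (hα1 : α ≠ 1) (hYm : Measurable Y)
    (hΘm : ∀ t, Measurable (Θ t)) (hY : Pareto P α Y)
    (hInd : IndepFun Y (fun ω t => Θ t ω) P) (hθ : 0 < extIdx P α Θ)
    (hQt : P.map (fun ω t => Qt t ω) = lawQtilde P α Y Θ)
    (hg : Integrable (fun ω => cQmax α Θ ω ^ (α - 1) * ∑' t, ‖cQ α Θ t ω‖) P) :
    Integrable (fun ω => ∑' t, ‖Qt t ω‖) P ∧ ∫ ω, ∑' t, ‖Qt t ω‖ ∂P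
      = (extIdx P α Θ)⁻¹ * ∫ ω, cQmax α Θ ω ^ (α - 1) * ∑' t, ‖cQ α Θ t ω‖ ∂P := by
  have hA := measure_one_lt_mul_cQmax hα hYm hΘm hY hInd
  have hAne := hA.trans_ne (ENNReal.ofReal_pos.2 hθ).ne'
  refine integrable_and_integral_eq_of_lintegral_eq (inv_nonneg.2 hθ.le)
    ((Measurable.tsum fun t => (measurable_pi_apply t).norm).comp_aemeasurable
      (aemeasurable_of_map_eq_lawQtilde hΘm hAne hQt)).aestronglyMeasurable
    (Eventually.of_forall fun ω => tsum_nonneg fun t => norm_nonneg _)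
    (Eventually.of_forall fun ω => mul_nonneg (Real.rpow_nonneg (cQmax_nonneg hα) _)
      (tsum_nonneg fun t => norm_nonneg _)) hg
    (lintegral_tsum_norm_eq_of_map_eq_lawQtilde hα hα1 hYm hΘm hY hInd hθ hQt)

theorem integrable_cQmax_rpow_mul_tsum_and_integral_le [IsProbabilityMeasure P] (hα1 : 1 < α)
    (hΘm : ∀ t, Measurable (Θ t))
    (hS : Integrable (fun ω => (∑' t, ‖cQ α Θ t ω‖) ^ α) P) :
    Integrable (fun ω => cQmax α Θ ω ^ (α - 1) * ∑' t, ‖cQ α Θ t ω‖) P ∧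
      ∫ ω, cQmax α Θ ω ^ (α - 1) * ∑' t, ‖cQ α Θ t ω‖ ∂P
        ≤ (∫ ω, (∑' t, ‖cQ α Θ t ω‖) ^ α ∂P) ^ (1 / α) := by
  have hα : 0 < α := by linarith
  have hS0 : ∀ ω, 0 ≤ ∑' t, ‖cQ α Θ t ω‖ := fun ω => tsum_nonneg fun t => norm_nonneg _
  have hSm := (measurable_tsum_norm_cQ (α := α) hΘm).aestronglyMeasurable (μ := P)
  have hSint : Integrable (fun ω => ∑' t, ‖cQ α Θ t ω‖) P := by
    refine MemLp.integrable (q := ENNReal.ofReal α) (by simpa using hα1.le)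
      ((integrable_norm_rpow_iff hSm (by simpa using hα) ENNReal.ofReal_ne_top).1 ?_)
    simpa only [ENNReal.toReal_ofReal hα.le, Real.norm_of_nonneg (hS0 _)] using hS
  have hle : ∀ ω, cQmax α Θ ω ^ (α - 1) * ∑' t, ‖cQ α Θ t ω‖ ≤ ∑' t, ‖cQ α Θ t ω‖ :=
    fun ω => mul_le_of_le_one_left (hS0 ω)
      (Real.rpow_le_one (cQmax_nonneg hα) (cQmax_le_one hα) (by linarith))
  have hg : Integrable (fun ω => cQmax α Θ ω ^ (α - 1) * ∑' t, ‖cQ α Θ t ω‖) P :=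
    hSint.mono' (((measurable_cQmax hΘm).pow_const _).aestronglyMeasurable.mul hSm)
      (Eventually.of_forall fun ω => by
        rw [Real.norm_of_nonneg (mul_nonneg (Real.rpow_nonneg (cQmax_nonneg hα) _) (hS0 ω))]
        exact hle ω)
  exact ⟨hg, (integral_mono hg hSint hle).trans
    (integral_le_integral_rpow_rpow hα1.le (Eventually.of_forall hS0) hSint hS)⟩

theorem integrable_cQmax_rpow_mul_tsum_and_integral_le_one [IsProbabilityMeasure P]
    (hα : 0 < α) (hα1 : α < 1) (hΘm : ∀ t, Measurable (Θ t))
    (hs : ∀ᵐ ω ∂P, Summable fun t => ‖Θ t ω‖ ^ α) :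
    Integrable (fun ω => cQmax α Θ ω ^ (α - 1) * ∑' t, ‖cQ α Θ t ω‖) P ∧
      ∫ ω, cQmax α Θ ω ^ (α - 1) * ∑' t, ‖cQ α Θ t ω‖ ∂P ≤ 1 := by
  have h0 : ∀ ω, 0 ≤ cQmax α Θ ω ^ (α - 1) * ∑' t, ‖cQ α Θ t ω‖ := fun ω =>
    mul_nonneg (Real.rpow_nonneg (cQmax_nonneg hα) _) (tsum_nonneg fun t => norm_nonneg _)
  have hle := hs.mono fun ω hω => cQmax_rpow_mul_tsum_norm_cQ_le_one hα hα1 hω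
  have hg : Integrable (fun ω => cQmax α Θ ω ^ (α - 1) * ∑' t, ‖cQ α Θ t ω‖) P :=
    Integrable.of_bound (((measurable_cQmax hΘm).pow_const _).mul
      (measurable_tsum_norm_cQ hΘm)).aestronglyMeasurable 1
      (hle.mono fun ω hω => (Real.norm_of_nonneg (h0 ω)).trans_le hω)
  refine ⟨hg, (integral_mono_ae hg (integrable_const 1) hle).trans ?_⟩
  simp

end SpectralCluster

theorem qtilde_sum_integrable_general
    {Ω : Type*} [MeasurableSpace Ω] {d : ℕ}
    (P : Measure Ω) [IsProbabilityMeasure P]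
    (X Θ Qt : ℤ → Ω → Euc d) (Y : Ω → ℝ) (α : ℝ) (a : ℕ → ℝ) (r : ℕ → ℕ)
    (hΘm : ∀ t, Measurable (Θ t)) (hYm : Measurable Y)
    (hα : 0 < α)
    (hrv : RegVary P X α Y Θ)
    (hΘsum : ∀ᵐ ω ∂P, Summable (fun t : ℤ => ‖Θ t ω‖ ^ α))
    (hQt : Measure.map (fun ω => (fun t : ℤ => Qt t ω)) P = lawQtilde P α Y Θ) :
    ((1 < α → AntiCl P X a r →
        Integrable (fun ω => (∑' t : ℤ, ‖cQ α Θ t ω‖) ^ α) P →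
      Integrable (fun ω => ∑' t : ℤ, ‖Qt t ω‖) P ∧
      (∫ ω, (∑' t : ℤ, ‖Qt t ω‖) ∂P)
        = (extIdx P α Θ)⁻¹
            * ∫ ω, cQmax α Θ ω ^ (α - 1) * (∑' t : ℤ, ‖cQ α Θ t ω‖) ∂P ∧
      (∫ ω, (∑' t : ℤ, ‖Qt t ω‖) ∂P)
        ≤ (extIdx P α Θ)⁻¹
            * (∫ ω, (∑' t : ℤ, ‖cQ α Θ t ω‖) ^ α ∂P) ^ (1 / α))) ∧
    (α < 1 →
      Integrable (fun ω => ∑' t : ℤ, ‖Qt t ω‖) P ∧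
      (∫ ω, (∑' t : ℤ, ‖Qt t ω‖) ∂P) ≤ (extIdx P α Θ)⁻¹) := by
  have hΘ0 : ∀ᵐ ω ∂P, Θ 0 ω ≠ 0 :=
    (hrv.one_le_norm_smul hYm (hΘm 0)).mono fun ω hω h0 => by norm_num [h0] at hω
  have hθ : 0 < extIdx P α Θ := extIdx_pos hα hΘm hΘ0 hΘsum
  have hθinv : 0 ≤ (extIdx P α Θ)⁻¹ := inv_nonneg.2 hθ.le
  have hQ := fun hα1 => integrable_and_integral_tsum_norm_eq_of_map_eq_lawQtilde hα hα1 hYm hΘm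
    hrv.1 hrv.2.1 hθ hQt
  refine ⟨fun hα1 _ hS => ?_, fun hα1 => ?_⟩
  · obtain ⟨hg, hgle⟩ := integrable_cQmax_rpow_mul_tsum_and_integral_le hα1 hΘm hS
    obtain ⟨hint, heq⟩ := hQ hα1.ne' hg
    exact ⟨hint, heq, heq ▸ mul_le_mul_of_nonneg_left hgle hθinv⟩
  · obtain ⟨hg, hgle⟩ := integrable_cQmax_rpow_mul_tsum_and_integral_le_one hα hα1 hΘm hΘsum
    obtain ⟨hint, heq⟩ := hQ hα1.ne hg
    exact ⟨hint, heq ▸ mul_le_of_le_one_right hθinv hgle⟩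

/-- Remark 4.2: integrability of `Σ_t |Q̃_t|`. (i) For `1 < α < 2` under anti-clustering
(so that `E[(Σ_t|Q_t|)^α] < ∞`), `E[Σ_t|Q̃_t|] = θ⁻¹ E[(max_t|Q_t|)^{α−1} Σ_t|Q_t|]
≤ θ⁻¹ (E[(Σ_t|Q_t|)^α])^{1/α} < ∞`; (ii) for `0 < α < 1`, `E[Σ_t|Q̃_t|] ≤ θ⁻¹ < ∞`. -/
theorem qtilde_sum_integrable
    {Ω : Type*} [MeasurableSpace Ω] {d : ℕ}
    (P : Measure Ω) [IsProbabilityMeasure P]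
    (X Θ Qt : ℤ → Ω → Euc d) (Y : Ω → ℝ) (α : ℝ) (a : ℕ → ℝ) (r : ℕ → ℕ)
    (hXm : ∀ t, Measurable (X t)) (hΘm : ∀ t, Measurable (Θ t)) (hYm : Measurable Y)
    (hα : 0 < α) (hα2 : α < 2)
    (hstat : Stationary P X)
    (hrv : RegVary P X α Y Θ)
    (ha : NormSeq P X a)
    (hr : Tendsto r atTop atTop) (hk : Tendsto (fun n => n / r n) atTop atTop)
    (hΘsum : ∀ᵐ ω ∂P, Summable (fun t : ℤ => ‖Θ t ω‖ ^ α))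
    (hQt : Measure.map (fun ω => (fun t : ℤ => Qt t ω)) P = lawQtilde P α Y Θ) :
    ((1 < α → AntiCl P X a r →
        Integrable (fun ω => (∑' t : ℤ, ‖cQ α Θ t ω‖) ^ α) P →
      Integrable (fun ω => ∑' t : ℤ, ‖Qt t ω‖) P ∧
      (∫ ω, (∑' t : ℤ, ‖Qt t ω‖) ∂P)
        = (extIdx P α Θ)⁻¹
            * ∫ ω, cQmax α Θ ω ^ (α - 1) * (∑' t : ℤ, ‖cQ α Θ t ω‖) ∂P ∧
      (∫ ω, (∑' t : ℤ, ‖Qt t ω‖) ∂P)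
        ≤ (extIdx P α Θ)⁻¹
            * (∫ ω, (∑' t : ℤ, ‖cQ α Θ t ω‖) ^ α ∂P) ^ (1 / α))) ∧
    (α < 1 →
      Integrable (fun ω => ∑' t : ℤ, ‖Qt t ω‖) P ∧
      (∫ ω, (∑' t : ℤ, ‖Qt t ω‖) ∂P) ≤ (extIdx P α Θ)⁻¹) :=
  qtilde_sum_integrable_general P X Θ Qt Y α a r hΘm hYm hα hrv hΘsum hQt
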